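/- Let G be the comparability graph of a finite poset P = (V, ≤). Let D be a minimal dominating set of G, let u ∈ D have a neighbor in D, let v ∈ priv(D, u) with u ≤ v, let X be a maximal independent set of the induced subgraph G[priv(D,u) ∖ N[v]], and set D' = (D ∖ {u}) ∪ X ∪ {v}. Let Z ⊆ D ∖ {u} be such that priv(D', z) = ∅ for every z ∈ Z and such that D* = D' ∖ Z is a minimal dominating set of G. Define R_1 = {x ∈ D* : u ≤ x and x ∈ priv(D*, x)}, B = V ∖ N[(D* ∖ R_1) ∪ {u}], R_2 = ↑B ∖ N[R_1], and Y = ⋃_{z∈Z} priv(D, z). Then X ⊆ R_1 ∖ {v}, Z ⊆ R_2, and Y ⊆ B. -/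

import Mathlib

/-!
In a comparability graph `N[a]` is the set of elements comparable to `a`, so everything reduces to
chasing order relations through the private-neighbour condition `N[y] ∩ D = {a}`.
The vertices of `X ∪ {v}` are private neighbours of `u` lying above `u` and are pairwise
incomparable, so each is its own private neighbour in `D*`; hence `X ∪ {v} ⊆ R₁` and
`(D* ∖ R₁) ∪ {u} ⊆ D ∖ Z`, which a private neighbour of `z ∈ Z` cannot see: `Y ⊆ B`.
A private neighbour `y` of `z ∈ Z` lies below `z`, for otherwise the second dominator of `y`
in `D'` (it exists since `priv(D', z) = ∅`) would force `z = u`. Finally `z` is incomparable to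
every `r ∈ R₁`: either `r ∈ priv(D, u)`, or `r ∈ D` lies above `u` and hence above its private
neighbours, as `z` does, and two distinct dominators each lying above one of its private
neighbours are incomparable.
-/

open Set

/-- The closed neighborhood `N[v]` of a vertex. -/
def closedNbhd {V : Type*} (G : SimpleGraph V) (v : V) : Set V :=
  insert v (G.neighborSet v)

/-- The closed neighborhood `N[S]` of a set of vertices. -/
def closedNbhdSet {V : Type*} (G : SimpleGraph V) (S : Set V) : Set V :=
  ⋃ v ∈ S, closedNbhd G v

/-- `D` is a dominating set of `G`. -/
def IsDomSet {V : Type*} (G : SimpleGraph V) (D : Set V) : Prop :=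
  ∀ w, w ∈ closedNbhdSet G D

/-- `D` is a minimal dominating set of `G`. -/
def IsMinDomSet {V : Type*} (G : SimpleGraph V) (D : Set V) : Prop :=
  IsDomSet G D ∧ ∀ D' ⊂ D, ¬ IsDomSet G D'

/-- The set `priv(D, u)` of private neighbors of `u` with respect to `D`:
vertices `v` with `N[v] ∩ D = {u}`. -/
def privSet {V : Type*} (G : SimpleGraph V) (D : Set V) (u : V) : Set V :=
  {v | closedNbhd G v ∩ D = {u}}

/-- `X` is a maximal independent set of the subgraph of `G` induced by `S`. -/
def IsMaxIndepOn {V : Type*} (G : SimpleGraph V) (S X : Set V) : Prop :=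
  X ⊆ S ∧ (∀ x ∈ X, ∀ y ∈ X, ¬ G.Adj x y) ∧
    ∀ X' ⊆ S, (∀ x ∈ X', ∀ y ∈ X', ¬ G.Adj x y) → X ⊆ X' → X' = X

/-- The comparability graph of a poset: distinct vertices are adjacent iff comparable. -/
def compGraph (V : Type*) [PartialOrder V] : SimpleGraph V :=
  SimpleGraph.fromRel (fun x y => x ≤ y)

section ClosedNbhd

variable {V : Type*} {G : SimpleGraph V}

lemma self_mem_closedNbhd (v : V) : v ∈ closedNbhd G v :=
  mem_insert v _

lemma mem_closedNbhd_comm {a b : V} : a ∈ closedNbhd G b ↔ b ∈ closedNbhd G a := by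
  simp only [closedNbhd, mem_insert_iff, SimpleGraph.mem_neighborSet, G.adj_comm, eq_comm]

lemma mem_closedNbhdSet_iff {S : Set V} {w : V} :
    w ∈ closedNbhdSet G S ↔ ∃ s ∈ S, w ∈ closedNbhd G s := by
  simp only [closedNbhdSet, mem_iUnion, exists_prop]

lemma mem_privSet_iff {D : Set V} {a y : V} :
    y ∈ privSet G D a ↔
      a ∈ D ∧ a ∈ closedNbhd G y ∧ ∀ w ∈ D, w ∈ closedNbhd G y → w = a := by
  change closedNbhd G y ∩ D = {a} ↔ _
  simp only [eq_singleton_iff_unique_mem, mem_inter_iff, and_imp]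
  tauto

lemma eq_of_mem_privSet {D : Set V} {a y w : V} (hy : y ∈ privSet G D a) (hw : w ∈ D)
    (hwy : w ∈ closedNbhd G y) : w = a :=
  (mem_privSet_iff.mp hy).2.2 w hw hwy

lemma mem_closedNbhd_of_mem_privSet {D : Set V} {a y : V} (hy : y ∈ privSet G D a) :
    a ∈ D ∧ a ∈ closedNbhd G y :=
  ⟨(mem_privSet_iff.mp hy).1, (mem_privSet_iff.mp hy).2.1⟩

lemma IsMinDomSet.exists_mem_privSet {D : Set V} (hD : IsMinDomSet G D) {d : V} (hd : d ∈ D) :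
    ∃ y, y ∈ privSet G D d := by
  by_contra! hpriv
  refine hD.2 (D \ {d}) (sdiff_singleton_ssubset.mpr hd) fun w => ?_
  by_contra hw
  have honly : ∀ x ∈ D, x ∈ closedNbhd G w → x = d := fun x hx hxw => by_contra fun hxd =>
    hw (mem_closedNbhdSet_iff.mpr ⟨x, ⟨hx, hxd⟩, mem_closedNbhd_comm.mp hxw⟩)
  obtain ⟨e, he, hwe⟩ := mem_closedNbhdSet_iff.mp (hD.1 w)
  have hew : e ∈ closedNbhd G w := mem_closedNbhd_comm.mp hwe
  exact hpriv w (mem_privSet_iff.mpr ⟨hd, honly e he hew ▸ hew, honly⟩)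

lemma notMem_closedNbhdSet_of_mem_privSet {D W : Set V} {z y : V} (hy : y ∈ privSet G D z)
    (hW : W ⊆ D \ {z}) : y ∉ closedNbhdSet G W := by
  rw [mem_closedNbhdSet_iff]
  rintro ⟨w, hw, hyw⟩
  exact (hW hw).2 (eq_of_mem_privSet hy (hW hw).1 (mem_closedNbhd_comm.mp hyw))

lemma exists_ne_of_privSet_eq_empty {T : Set V} {z y : V} (hz : privSet G T z = ∅)
    (hzT : z ∈ T) (hzy : z ∈ closedNbhd G y) :
    ∃ d ∈ T, d ∈ closedNbhd G y ∧ d ≠ z := by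
  by_contra! h
  exact eq_empty_iff_forall_notMem.mp hz y (mem_privSet_iff.mpr ⟨hzT, hzy, h⟩)

lemma IsMaxIndepOn.isIndepSet_insert {P X : Set V} {v : V}
    (hX : IsMaxIndepOn G (P \ closedNbhd G v) X) : G.IsIndepSet (insert v X) := by
  refine G.isIndepSet_iff.mpr (pairwise_insert.mpr
    ⟨fun x hx y hy _ => hX.2.1 x hx y hy, fun x hx _ => ⟨fun hvx => ?_, fun hxv => ?_⟩⟩)
  · exact (hX.1 hx).2 (mem_insert_of_mem v hvx)
  · exact (hX.1 hx).2 (mem_insert_of_mem v hxv.symm)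

lemma mem_privSet_self_of_subset_union {D S T : Set V} {u s : V}
    (hS : S ⊆ privSet G D u) (hSi : G.IsIndepSet S) (hT : T ⊆ (D \ {u}) ∪ S)
    (hs : s ∈ S) (hsT : s ∈ T) : s ∈ privSet G T s := by
  refine mem_privSet_iff.mpr ⟨hsT, self_mem_closedNbhd s, fun w hw hws => ?_⟩
  rcases hT hw with ⟨hwD, hwu⟩ | hwS
  · exact absurd (eq_of_mem_privSet (hS hs) hwD hws) hwu
  · rcases hws with rfl | hadj
    · rfl
    · exact absurd hadj (hSi hs hwS (G.ne_of_adj hadj))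

end ClosedNbhd

section Comparability

variable {V : Type*} [PartialOrder V]

lemma mem_closedNbhd_compGraph {a b : V} :
    a ∈ closedNbhd (compGraph V) b ↔ a ≤ b ∨ b ≤ a := by
  simp only [closedNbhd, compGraph, mem_insert_iff, SimpleGraph.mem_neighborSet,
    SimpleGraph.fromRel_adj]
  constructor
  · rintro (rfl | ⟨-, h⟩)
    · exact Or.inl le_rfl
    · tauto
  · intro h
    by_cases hab : a = b
    · exact Or.inl hab
    · exact Or.inr ⟨Ne.symm hab, by tauto⟩

lemma le_of_mem_privSet_of_notMem_closedNbhd {D : Set V} {u v x : V} (huv : u ≤ v)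
    (hx : x ∈ privSet (compGraph V) D u) (hxv : x ∉ closedNbhd (compGraph V) v) : u ≤ x := by
  refine (mem_closedNbhd_compGraph.mp (mem_closedNbhd_of_mem_privSet hx).2).resolve_right ?_
  exact fun hxu => hxv (mem_closedNbhd_compGraph.mpr (Or.inl (hxu.trans huv)))

lemma le_of_mem_privSet_of_le {D : Set V} {u r p : V} (hu : u ∈ D) (hur : u ≤ r) (hru : r ≠ u)
    (hp : p ∈ privSet (compGraph V) D r) : p ≤ r := by
  refine (mem_closedNbhd_compGraph.mp (mem_closedNbhd_of_mem_privSet hp).2).resolve_left ?_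
  exact fun hrp => hru (eq_of_mem_privSet hp hu
    (mem_closedNbhd_compGraph.mpr (Or.inl (hur.trans hrp)))).symm

lemma notMem_closedNbhd_of_mem_privSet_of_le {D : Set V} {a b p q : V} (hab : a ≠ b)
    (hp : p ∈ privSet (compGraph V) D a) (hpa : p ≤ a)
    (hq : q ∈ privSet (compGraph V) D b) (hqb : q ≤ b) : a ∉ closedNbhd (compGraph V) b := by
  rw [mem_closedNbhd_compGraph]
  rintro (hle | hle)
  · exact hab (eq_of_mem_privSet hp (mem_closedNbhd_of_mem_privSet hq).1
      (mem_closedNbhd_compGraph.mpr (Or.inr (hpa.trans hle)))).symm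
  · exact hab (eq_of_mem_privSet hq (mem_closedNbhd_of_mem_privSet hp).1
      (mem_closedNbhd_compGraph.mpr (Or.inr (hqb.trans hle))))

lemma le_of_mem_privSet_of_privSet_eq_empty {D S T : Set V} {u z y : V} (hu : u ∈ D)
    (hS : S ⊆ privSet (compGraph V) D u) (hSu : ∀ s ∈ S, u ≤ s) (hT : T ⊆ (D \ {u}) ∪ S)
    (hzT : z ∈ T) (hzu : z ≠ u) (hz : privSet (compGraph V) T z = ∅)
    (hy : y ∈ privSet (compGraph V) D z) : y ≤ z := by
  obtain ⟨hzD, hzy⟩ := mem_closedNbhd_of_mem_privSet hy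
  refine (mem_closedNbhd_compGraph.mp hzy).resolve_left fun hzy' => ?_
  obtain ⟨d, hdT, hdy, hdz⟩ := exists_ne_of_privSet_eq_empty hz hzT hzy
  rcases hT hdT with ⟨hdD, -⟩ | hdS
  · exact hdz (eq_of_mem_privSet hy hdD hdy)
  rcases mem_closedNbhd_compGraph.mp hdy with hdy | hyd
  · exact hzu (eq_of_mem_privSet hy hu
      (mem_closedNbhd_compGraph.mpr (Or.inl ((hSu d hdS).trans hdy)))).symm
  · exact hzu (eq_of_mem_privSet (hS hdS) hzD
      (mem_closedNbhd_compGraph.mpr (Or.inl (hzy'.trans hyd))))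

lemma notMem_closedNbhd_of_le_of_mem_privSet {D S T : Set V} {u z y r : V}
    (hD : IsMinDomSet (compGraph V) D) (hu : u ∈ D) (hS : S ⊆ privSet (compGraph V) D u)
    (hT : T ⊆ (D \ {u}) ∪ S) (hzu : z ≠ u) (hy : y ∈ privSet (compGraph V) D z)
    (hyz : y ≤ z)
    (hrT : r ∈ T) (hur : u ≤ r) (hzr : z ≠ r) : z ∉ closedNbhd (compGraph V) r := by
  have hzD := (mem_closedNbhd_of_mem_privSet hy).1
  rcases hT hrT with ⟨hrD, hru⟩ | hrS
  · obtain ⟨p, hp⟩ := hD.exists_mem_privSet hrD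
    exact notMem_closedNbhd_of_mem_privSet_of_le hzr hy hyz hp
      (le_of_mem_privSet_of_le hu hur hru hp)
  · exact fun hzr' => hzu (eq_of_mem_privSet (hS hrS) hzD hzr')

end Comparability

theorem stmt8_general {V : Type*} [PartialOrder V]
    (D : Set V) (hD : IsMinDomSet (compGraph V) D)
    (u : V) (hu : u ∈ D)
    (v : V) (hv : v ∈ privSet (compGraph V) D u) (huv : u ≤ v)
    (X : Set V)
    (hX : IsMaxIndepOn (compGraph V)
      (privSet (compGraph V) D u \ closedNbhd (compGraph V) v) X)
    (D' : Set V) (hD' : D' = (D \ {u}) ∪ X ∪ {v})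
    (Z : Set V) (hZ : Z ⊆ D \ {u})
    (hZpriv : ∀ z ∈ Z, privSet (compGraph V) D' z = ∅)
    (Dstar : Set V) (hDstar : Dstar = D' \ Z)
    (R1 B R2 Y : Set V)
    (hR1 : R1 = {x ∈ Dstar | u ≤ x ∧ x ∈ privSet (compGraph V) Dstar x})
    (hB : B = univ \ closedNbhdSet (compGraph V) ((Dstar \ R1) ∪ {u}))
    (hR2 : R2 = {w : V | ∃ s ∈ B, s ≤ w} \ closedNbhdSet (compGraph V) R1)
    (hY : Y = ⋃ z ∈ Z, privSet (compGraph V) D z) :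
    X ⊆ R1 \ {v} ∧ Z ⊆ R2 ∧ Y ⊆ B := by
  rw [union_singleton, ← union_insert] at hD'
  subst hD' hDstar
  have hS : insert v X ⊆ privSet (compGraph V) D u := insert_subset hv fun x hx => (hX.1 hx).1
  have hSu : ∀ s ∈ insert v X, u ≤ s := forall_mem_insert.mpr
    ⟨huv, fun x hx => le_of_mem_privSet_of_notMem_closedNbhd huv (hX.1 hx).1 (hX.1 hx).2⟩
  have hSR1 : insert v X ⊆ R1 := fun s hs => by
    have hsZ : s ∉ Z := fun hsZ => (hZ hsZ).2 (eq_of_mem_privSet (hS hs) (hZ hsZ).1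
      (self_mem_closedNbhd s))
    exact hR1 ▸ ⟨⟨Or.inr hs, hsZ⟩, hSu s hs, mem_privSet_self_of_subset_union hS
      hX.isIndepSet_insert sdiff_subset hs ⟨Or.inr hs, hsZ⟩⟩
  have hYB : ∀ z ∈ Z, privSet (compGraph V) D z ⊆ B := fun z hz y hy => by
    refine hB ▸ ⟨mem_univ y, notMem_closedNbhdSet_of_mem_privSet hy ?_⟩
    rintro w (⟨⟨⟨hwD, -⟩ | hwS, hwZ⟩, hwR1⟩ | rfl)
    · exact ⟨hwD, fun hwz => hwZ (hwz ▸ hz)⟩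
    · exact absurd (hSR1 hwS) hwR1
    · exact ⟨hu, fun hzu => (hZ hz).2 hzu.symm⟩
  refine ⟨fun x hx => ⟨hSR1 (mem_insert_of_mem v hx), ?_⟩, fun z hz => ?_,
    hY ▸ iUnion₂_subset hYB⟩
  · rintro rfl
    exact (hX.1 hx).2 (self_mem_closedNbhd x)
  obtain ⟨y, hy⟩ := hD.exists_mem_privSet (hZ hz).1
  have hyz : y ≤ z := le_of_mem_privSet_of_privSet_eq_empty hu hS hSu subset_rfl
    (Or.inl (hZ hz)) (hZ hz).2 (hZpriv z hz) hy
  refine hR2 ▸ ⟨⟨y, hYB z hz hy, hyz⟩, fun hzR1 => ?_⟩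
  obtain ⟨r, hr, hzr⟩ := mem_closedNbhdSet_iff.mp hzR1
  rw [hR1] at hr
  exact notMem_closedNbhd_of_le_of_mem_privSet hD hu hS subset_rfl (hZ hz).2 hy hyz hr.1.1 hr.2.1
    (fun hzr' => hr.1.2 (hzr' ▸ hz)) hzr

/-- In the comparability graph of a finite poset, with the flipping setup
(`D` minimal dominating, `u ∈ D` with a neighbor in `D`, `v ∈ priv(D,u)`, `u ≤ v`,
`X` a maximal independent set of `G[priv(D,u) ∖ N[v]]`, `D' = (D ∖ {u}) ∪ X ∪ {v}`,
`Z ⊆ D ∖ {u}` consisting of vertices with no private neighbor w.r.t. `D'`, and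
`D* = D' ∖ Z` a minimal dominating set), defining
`R₁ = {x ∈ D* : u ≤ x, x ∈ priv(D*,x)}`, `B = V ∖ N[(D* ∖ R₁) ∪ {u}]`,
`R₂ = ↑B ∖ N[R₁]` and `Y = ⋃_{z ∈ Z} priv(D,z)`, we have
`X ⊆ R₁ ∖ {v}`, `Z ⊆ R₂` and `Y ⊆ B`. -/
theorem stmt8 {V : Type*} [Fintype V] [PartialOrder V]
    (D : Set V) (hD : IsMinDomSet (compGraph V) D)
    (u : V) (hu : u ∈ D) (hnb : ∃ w ∈ D, (compGraph V).Adj u w)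
    (v : V) (hv : v ∈ privSet (compGraph V) D u) (huv : u ≤ v)
    (X : Set V)
    (hX : IsMaxIndepOn (compGraph V)
      (privSet (compGraph V) D u \ closedNbhd (compGraph V) v) X)
    (D' : Set V) (hD' : D' = (D \ {u}) ∪ X ∪ {v})
    (Z : Set V) (hZ : Z ⊆ D \ {u})
    (hZpriv : ∀ z ∈ Z, privSet (compGraph V) D' z = ∅)
    (Dstar : Set V) (hDstar : Dstar = D' \ Z)
    (hmin : IsMinDomSet (compGraph V) Dstar)
    (R1 B R2 Y : Set V)
    (hR1 : R1 = {x ∈ Dstar | u ≤ x ∧ x ∈ privSet (compGraph V) Dstar x})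
    (hB : B = univ \ closedNbhdSet (compGraph V) ((Dstar \ R1) ∪ {u}))
    (hR2 : R2 = {w : V | ∃ s ∈ B, s ≤ w} \ closedNbhdSet (compGraph V) R1)
    (hY : Y = ⋃ z ∈ Z, privSet (compGraph V) D z) :
    X ⊆ R1 \ {v} ∧ Z ⊆ R2 ∧ Y ⊆ B :=
  stmt8_general D hD u hu v hv huv X hX D' hD' Z hZ hZpriv Dstar hDstar R1 B R2 Y hR1 hB hR2 hY
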